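/- For A = KΔ/R_Δ^2 on the cyclic quiver with 3 vertices and the 2-cocycle γ defined by γ(a,b) = x_i* if ab = x_{i+1}x_{i+2} (indices mod 3) for nontrivial paths a,b, and γ(a,b) = 0 otherwise (and vanishing when either argument involves a trivial path component), the Hochschild extension algebra T_γ(A) is isomorphic as a K-algebra to KΔ/R_Δ^4, and is a symmetric algebra. -/
import Mathlib


/-- The truncated cycle algebra `A = KΔ/R_Δ^n` on the cyclic quiver `Δ` with `s` vertices:
its basis consists of the paths `p_{i,ℓ}` starting at vertex `i` of length `ℓ ≤ n−1`. -/
abbrev TCA (K : Type*) [Field K] (s n : ℕ) : Type _ := (ZMod s × Fin n) → K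

variable {K : Type*} [Field K] {s n : ℕ}

/-- Multiplication of the truncated cycle algebra: concatenation of paths, truncated at
length `n`. -/
noncomputable def tcaMul (f g : TCA K s n) : TCA K s n :=
  fun p =>
    ∑ l ∈ Finset.range (p.2.1 + 1),
      f (p.1, ⟨l % n, Nat.mod_lt _ (Nat.lt_of_le_of_lt (Nat.zero_le _) p.2.isLt)⟩) *
      g (p.1 + (l : ZMod s),
        ⟨(p.2.1 - l) % n, Nat.mod_lt _ (Nat.lt_of_le_of_lt (Nat.zero_le _) p.2.isLt)⟩)

/-- The identity `Σ_i e_i` of the truncated cycle algebra. -/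
noncomputable def tcaOne : TCA K s n := fun p => if p.2.1 = 0 then 1 else 0

/-- The primitive idempotent `e_i` (trivial path at vertex `i`). -/
noncomputable def tcaIdem (i : ZMod s) : TCA K s n :=
  fun p => if p.1 = i ∧ p.2.1 = 0 then 1 else 0

/-- Right multiplication by `a`, as a `K`-linear map. -/
noncomputable def tcaMulRight (a : TCA K s n) : TCA K s n →ₗ[K] TCA K s n where
  toFun c := tcaMul c a
  map_add' x y := by
    funext p; simp [tcaMul, add_mul, Finset.sum_add_distrib]
  map_smul' k x := by
    funext p; simp [tcaMul, Finset.mul_sum, mul_assoc]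

/-- Left multiplication by `b`, as a `K`-linear map. -/
noncomputable def tcaMulLeft (b : TCA K s n) : TCA K s n →ₗ[K] TCA K s n where
  toFun c := tcaMul b c
  map_add' x y := by
    funext p; simp [tcaMul, mul_add, Finset.sum_add_distrib]
  map_smul' k x := by
    funext p
    simp [tcaMul, Finset.mul_sum]
    exact Finset.sum_congr rfl fun l _ => by ring

/-- Left action of `A` on `D(A)`: `(a·f)(c) = f(c a)`. -/
noncomputable def tcaLact (a : TCA K s n) (f : Module.Dual K (TCA K s n)) :
    Module.Dual K (TCA K s n) :=
  f ∘ₗ tcaMulRight a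

/-- Right action of `A` on `D(A)`: `(f·b)(c) = f(b c)`. -/
noncomputable def tcaRact (f : Module.Dual K (TCA K s n)) (b : TCA K s n) :
    Module.Dual K (TCA K s n) :=
  f ∘ₗ tcaMulLeft b

/-- Hochschild 2-cocycle condition for the truncated cycle algebra. -/
def IsTcaCocycle (α : TCA K s n → TCA K s n → Module.Dual K (TCA K s n)) : Prop :=
  (∀ a b c, α (a + b) c = α a c + α b c) ∧
  (∀ a b c, α a (b + c) = α a b + α a c) ∧
  (∀ (k : K) a b, α (k • a) b = k • α a b) ∧
  (∀ (k : K) a b, α a (k • b) = k • α a b) ∧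
  (∀ a b c, tcaLact a (α b c) - α (tcaMul a b) c + α a (tcaMul b c)
      - tcaRact (α a b) c = 0)

/-- The multiplication of the Hochschild extension `T_α(A) = A ⊕ D(A)`. -/
noncomputable def tcaExtMul (α : TCA K s n → TCA K s n → Module.Dual K (TCA K s n))
    (p q : TCA K s n × Module.Dual K (TCA K s n)) :
    TCA K s n × Module.Dual K (TCA K s n) :=
  (tcaMul p.1 q.1, tcaLact p.1 q.2 + tcaRact p.2 q.1 + α p.1 q.1)

/-- The identity `(1, −α(1,1))` of `T_α(A)`. -/
noncomputable def tcaExtOne (α : TCA K s n → TCA K s n → Module.Dual K (TCA K s n)) :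
    TCA K s n × Module.Dual K (TCA K s n) :=
  (tcaOne, -α tcaOne tcaOne)

/-- `α` and `β` are cohomologous 2-cocycles, i.e. they differ by the coboundary of some
`K`-linear map `h : A → D(A)`. -/
def TcaCohomologous (α β : TCA K s n → TCA K s n → Module.Dual K (TCA K s n)) : Prop :=
  ∃ h : TCA K s n →ₗ[K] Module.Dual K (TCA K s n),
    ∀ a b, α a b - β a b = tcaLact a (h b) - h (tcaMul a b) + tcaRact (h a) b

variable [NeZero s]

/-- The standard 2-cocycles obtained, through the comparison isomorphism
`Θ : ⊕_q D(HH_{2,q}(A)) ≅ H²(A, D(A))`, from the dual basis elements of degree `q`: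
`Σ_i k_i·α_i` where `α_i(x_i⋯x_{i+m₁−1}, x_{i+m₁}⋯x_{i+m−1}) = (x_{i+m}⋯x_{i+q−1})*`
whenever `n ≤ m ≤ q` (and `0` otherwise).  The classes in `Θ(D(HH_{2,q}(A)))` are exactly
those of `stdCocycle q k` — with `k` constant when `n+1 ≤ q ≤ 2n−1`. -/
noncomputable def stdCocycle (q : ℕ) (k : ZMod s → K) :
    TCA K s n → TCA K s n → Module.Dual K (TCA K s n) :=
  fun f g =>
    ∑ i : ZMod s, ∑ l₁ : Fin n, ∑ l₂ : Fin n,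
      if h : n ≤ l₁.1 + l₂.1 ∧ l₁.1 + l₂.1 ≤ q ∧ q - (l₁.1 + l₂.1) < n then
        (k i * f (i, l₁) * g (i + (l₁.1 : ZMod s), l₂)) •
          (LinearMap.proj ((i + ((l₁.1 + l₂.1 : ℕ) : ZMod s),
              ⟨q - (l₁.1 + l₂.1), h.2.2⟩)) :
            Module.Dual K (TCA K s n))
      else 0


section Aux

/-- basis delta functions -/
noncomputable def tcaδ (p : ZMod s × Fin n) : TCA K s n := fun q => if p = q then 1 else 0

lemma mul_δ_one_left (j : ZMod 3) (a : TCA K 3 2) :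
    tcaMul (tcaδ (j, 1)) a = a (j + 1, 0) • tcaδ (j, 1) := by
  funext ⟨p1, m⟩
  fin_cases m <;>
    simp [tcaMul, tcaδ, Finset.sum_range_succ, Prod.ext_iff, Fin.ext_iff, eq_comm] <;>
    split <;> simp_all

lemma mul_δ_zero_left (j : ZMod 3) (a : TCA K 3 2) :
    tcaMul (tcaδ (j, 0)) a = a (j, 0) • tcaδ (j, 0) + a (j, 1) • tcaδ (j, 1) := by
  funext ⟨p1, m⟩
  fin_cases m <;>
    simp [tcaMul, tcaδ, Finset.sum_range_succ, Prod.ext_iff, Fin.ext_iff, eq_comm] <;>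
    split <;> simp_all

lemma mul_δ_one_right (j : ZMod 3) (b : TCA K 3 2) :
    tcaMul b (tcaδ (j, 1)) = b (j, 0) • tcaδ (j, 1) := by
  funext ⟨p1, m⟩
  fin_cases m <;>
    simp [tcaMul, tcaδ, Finset.sum_range_succ, Prod.ext_iff, Fin.ext_iff, eq_comm] <;>
    split <;> simp_all

lemma mul_δ_zero_right (j : ZMod 3) (b : TCA K 3 2) :
    tcaMul b (tcaδ (j, 0)) = b (j, 0) • tcaδ (j, 0) + b (j - 1, 1) • tcaδ (j - 1, 1) := by
  funext ⟨p1, m⟩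
  fin_cases m <;>
    simp [tcaMul, tcaδ, Finset.sum_range_succ, Prod.ext_iff, Fin.ext_iff, eq_comm,
      eq_sub_iff_add_eq] <;>
    rcases eq_or_ne j (p1 + 1) with h | h <;> simp_all [eq_comm]

lemma tca_one_mul (a : TCA K 3 2) : tcaMul tcaOne a = a := by
  funext ⟨p1, m⟩
  fin_cases m <;> simp [tcaMul, tcaOne, Finset.sum_range_succ]

lemma tca_mul_one (a : TCA K 3 2) : tcaMul a tcaOne = a := by
  funext ⟨p1, m⟩
  fin_cases m <;> simp [tcaMul, tcaOne, Finset.sum_range_succ]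

lemma finval0 : ((0 : Fin 4) : ℕ) = 0 := rfl
lemma finval1 : ((1 : Fin 4) : ℕ) = 1 := rfl
lemma finval2 : ((2 : Fin 4) : ℕ) = 2 := rfl
lemma finval3 : ((3 : Fin 4) : ℕ) = 3 := rfl

variable [NeZero s]

/-- The specific cocycle reduced to a single sum. -/
lemma gamma_eq (a b : TCA K 3 2) :
    stdCocycle (K := K) (s := 3) (n := 2) 3 (fun _ => 1) a b =
      ∑ i : ZMod 3, (a (i, 1) * b (i + 1, 1)) •
        (LinearMap.proj (i + 2, (1 : Fin 2)) : Module.Dual K (TCA K 3 2)) := by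
  unfold stdCocycle
  refine Finset.sum_congr rfl fun i _ => ?_
  rw [Fin.sum_univ_two, Fin.sum_univ_two, Fin.sum_univ_two]
  norm_num

lemma gamma_apply_δ (a b : TCA K 3 2) (p : ZMod 3 × Fin 2) :
    stdCocycle (K := K) (s := 3) (n := 2) 3 (fun _ => 1) a b (tcaδ p) =
      if p.2 = 1 then a (p.1 + 1, 1) * b (p.1 + 2, 1) else 0 := by
  rw [gamma_eq]
  rw [LinearMap.sum_apply]
  obtain ⟨j, m⟩ := p
  have : ∀ i : ZMod 3, ((a (i, 1) * b (i + 1, 1)) •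
        (LinearMap.proj (i + 2, (1 : Fin 2)) : Module.Dual K (TCA K 3 2))) (tcaδ (j, m)) =
      if i = j + 1 ∧ m = 1 then a (j + 1, 1) * b (j + 2, 1) else 0 := by
    intro i
    simp only [LinearMap.smul_apply, LinearMap.proj_apply, tcaδ, Prod.ext_iff, smul_eq_mul]
    rcases eq_or_ne i (j + 1) with h | h
    · subst h
      have h2 : j + 1 + 2 = j := by ring_nf; rw [show (3 : ZMod 3) = 0 by decide]; ring
      simp [h2, eq_comm, show j + 1 + 1 = j + 2 by ring]
    · have h2 : ¬ (j = i + 2) := by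
        intro hh; apply h; rw [hh]; ring_nf; rw [show (3 : ZMod 3) = 0 by decide]; ring
      simp [h2, h]
  simp [this, ite_and]

lemma gamma_apply_one (a b : TCA K 3 2) :
    stdCocycle (K := K) (s := 3) (n := 2) 3 (fun _ => 1) a b tcaOne = 0 := by
  rw [gamma_eq, LinearMap.sum_apply]
  simp [tcaOne]

lemma gamma_zero_right (a : TCA K 3 2) :
    stdCocycle (K := K) (s := 3) (n := 2) 3 (fun _ => 1) a 0 = 0 := by
  rw [gamma_eq]; simp

lemma gamma_one_one :
    stdCocycle (K := K) (s := 3) (n := 2) 3 (fun _ => 1) tcaOne tcaOne = 0 := by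
  rw [gamma_eq]; simp [tcaOne]

/-- The forward map of the isomorphism. -/
noncomputable def tcaF : (TCA K 3 2 × Module.Dual K (TCA K 3 2)) →ₗ[K] TCA K 3 4 where
  toFun x := fun p =>
    if h : p.2.1 < 2 then x.1 (p.1, ⟨p.2.1, h⟩)
    else if p.2.1 = 2 then x.2 (tcaδ (p.1 - 1, 1))
    else x.2 (tcaδ (p.1, 0))
  map_add' x y := by
    funext p
    simp only [Prod.fst_add, Prod.snd_add, Pi.add_apply, LinearMap.add_apply]
    split_ifs <;> simp
  map_smul' k x := by
    funext p
    simp only [Prod.smul_fst, Prod.smul_snd, Pi.smul_apply, LinearMap.smul_apply,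
      RingHom.id_apply, smul_eq_mul]
    split_ifs <;> simp

/-- The inverse map of the isomorphism. -/
noncomputable def tcaG : TCA K 3 4 →ₗ[K] (TCA K 3 2 × Module.Dual K (TCA K 3 2)) where
  toFun c :=
    (fun p => c (p.1, ⟨p.2.1, Nat.lt_of_lt_of_le p.2.isLt (by norm_num)⟩),
     { toFun := fun v => ∑ i : ZMod 3, (c (i + 1, 2) * v (i, 1) + c (i, 3) * v (i, 0))
       map_add' := fun v w => by
         simp only [Pi.add_apply, mul_add]
         rw [← Finset.sum_add_distrib]
         exact Finset.sum_congr rfl fun i _ => by ring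
       map_smul' := fun k v => by
         simp only [Pi.smul_apply, smul_eq_mul, RingHom.id_apply, Finset.mul_sum]
         exact Finset.sum_congr rfl fun i _ => by ring })
  map_add' c d := by
    refine Prod.ext (by funext p; simp) ?_
    refine LinearMap.ext fun v => ?_
    simp only [Pi.add_apply, LinearMap.coe_mk, AddHom.coe_mk, Prod.snd_add,
      LinearMap.add_apply, add_mul]
    rw [← Finset.sum_add_distrib]
    exact Finset.sum_congr rfl fun i _ => by ring
  map_smul' k c := by
    refine Prod.ext (by funext p; simp) ?_
    refine LinearMap.ext fun v => ?_
    simp only [Pi.smul_apply, LinearMap.coe_mk, AddHom.coe_mk, Prod.smul_snd,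
      LinearMap.smul_apply, RingHom.id_apply, smul_eq_mul, Finset.mul_sum]
    exact Finset.sum_congr rfl fun i _ => by ring

lemma tcaFG : (tcaF (K := K)) ∘ₗ (tcaG (K := K)) = LinearMap.id := by
  refine LinearMap.ext fun c => ?_
  funext ⟨i, m⟩
  fin_cases m <;>
    simp [tcaF, tcaG, tcaδ, Prod.ext_iff, sub_add_cancel,
      finval0, finval1, finval2, finval3]

lemma tcaGF : (tcaG (K := K)) ∘ₗ (tcaF (K := K)) = LinearMap.id := by
  refine LinearMap.ext fun x => ?_
  refine Prod.ext ?_ ?_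
  · funext ⟨i, m⟩
    fin_cases m <;> simp [tcaF, tcaG]
  · refine LinearMap.ext fun v => ?_
    simp only [tcaF, tcaG, LinearMap.coe_comp, Function.comp_apply, LinearMap.coe_mk,
      AddHom.coe_mk, LinearMap.id_coe, id_eq]
    rw [LinearMap.pi_apply_eq_sum_univ x.2 v, Fintype.sum_prod_type]
    refine Finset.sum_congr rfl fun i _ => ?_
    rw [Fin.sum_univ_two]
    simp only [finval2, finval3]
    norm_num [add_sub_cancel_right]
    unfold tcaδ
    ring


lemma ext_dual_one (a b : TCA K 3 2) (f g : Module.Dual K (TCA K 3 2)) (j : ZMod 3) :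
    (tcaLact a g + tcaRact f b +
        stdCocycle (K := K) (s := 3) (n := 2) 3 (fun _ => 1) a b) (tcaδ (j, 1)) =
      a (j + 1, 0) * g (tcaδ (j, 1)) + b (j, 0) * f (tcaδ (j, 1)) +
        a (j + 1, 1) * b (j + 2, 1) := by
  simp only [LinearMap.add_apply, tcaLact, tcaRact, LinearMap.comp_apply, tcaMulRight,
    tcaMulLeft, LinearMap.coe_mk, AddHom.coe_mk, mul_δ_one_left, mul_δ_one_right,
    map_smul, smul_eq_mul, gamma_apply_δ]
  simp

lemma ext_dual_zero (a b : TCA K 3 2) (f g : Module.Dual K (TCA K 3 2)) (j : ZMod 3) :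
    (tcaLact a g + tcaRact f b +
        stdCocycle (K := K) (s := 3) (n := 2) 3 (fun _ => 1) a b) (tcaδ (j, 0)) =
      a (j, 0) * g (tcaδ (j, 0)) + a (j, 1) * g (tcaδ (j, 1)) +
        (b (j, 0) * f (tcaδ (j, 0)) + b (j - 1, 1) * f (tcaδ (j - 1, 1))) := by
  simp only [LinearMap.add_apply, tcaLact, tcaRact, LinearMap.comp_apply, tcaMulRight,
    tcaMulLeft, LinearMap.coe_mk, AddHom.coe_mk, mul_δ_zero_left, mul_δ_zero_right,
    map_add, map_smul, smul_eq_mul, gamma_apply_δ]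
  simp

end Aux

/-- for `A = KΔ/R_Δ²` on the cyclic quiver with `3` vertices and the
2-cocycle `γ` with `γ(a,b) = x_i*` when `ab = x_{i+1}x_{i+2}` (indices mod 3) and `0`
otherwise — i.e. the standard degree-`3` cocycle — the Hochschild extension `T_γ(A)` is
isomorphic as a `K`-algebra to `KΔ/R_Δ⁴`, and is a symmetric algebra. -/
theorem tca_three_two_symmetric (K : Type*) [Field K] :
    (∃ e : (TCA K 3 2 × Module.Dual K (TCA K 3 2)) ≃ₗ[K] TCA K 3 4,
      (∀ x y,
        e (tcaExtMul (stdCocycle (K := K) (s := 3) (n := 2) 3 (fun _ => 1)) x y) =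
          tcaMul (e x) (e y)) ∧
      e (tcaExtOne (stdCocycle (K := K) (s := 3) (n := 2) 3 (fun _ => 1))) = tcaOne) ∧
    (∃ φ : (TCA K 3 2 × Module.Dual K (TCA K 3 2)) →ₗ[K] K,
      (∀ x y,
        φ (tcaExtMul (stdCocycle (K := K) (s := 3) (n := 2) 3 (fun _ => 1)) x y) =
          φ (tcaExtMul (stdCocycle (K := K) (s := 3) (n := 2) 3 (fun _ => 1)) y x)) ∧
      ∀ x, x ≠ 0 →
        ∃ y, φ (tcaExtMul (stdCocycle (K := K) (s := 3) (n := 2) 3 (fun _ => 1)) x y) ≠ 0) := by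
  have z1 : ∀ j : ZMod 3, j - 1 = j + 2 := by decide
  have z2 : ∀ j : ZMod 3, j + 2 + 1 = j := by decide
  have z3 : ∀ j : ZMod 3, j + 2 + 2 = j + 1 := by decide
  have z4 : ∀ j : ZMod 3, j + 1 + 1 = j + 2 := by decide
  have z5 : ∀ j : ZMod 3, j + 3 = j := by decide
  have z6 : ∀ j : ZMod 3, j + 1 + 2 = j := by decide
  constructor
  · refine ⟨LinearEquiv.ofLinear tcaF tcaG tcaFG tcaGF, ?_, ?_⟩
    · rintro ⟨a, f⟩ ⟨b, g⟩
      simp only [LinearEquiv.ofLinear_apply]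
      funext ⟨i, m⟩
      fin_cases m
      · simp only [tcaF, tcaExtMul, LinearMap.coe_mk, AddHom.coe_mk, tcaMul,
          Finset.sum_range_succ, Finset.sum_range_zero, finval0, finval1, finval2, finval3]
        norm_num
      · simp only [tcaF, tcaExtMul, LinearMap.coe_mk, AddHom.coe_mk, tcaMul,
          Finset.sum_range_succ, Finset.sum_range_zero, finval0, finval1, finval2, finval3]
        norm_num
      · show tcaF (K := K)
            (tcaExtMul (stdCocycle (K := K) (s := 3) (n := 2) 3 fun _ => 1) (a, f) (b, g))
              (i, 2) = tcaMul (tcaF (a, f)) (tcaF (b, g)) (i, 2)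
        have e1 : tcaF (K := K)
            (tcaExtMul (stdCocycle (K := K) (s := 3) (n := 2) 3 fun _ => 1) (a, f) (b, g))
              (i, 2) =
            (tcaLact a g + tcaRact f b +
              stdCocycle (K := K) (s := 3) (n := 2) 3 (fun _ => 1) a b) (tcaδ (i - 1, 1)) := by
          simp [tcaF, tcaExtMul, finval2]
        rw [e1, ext_dual_one]
        simp only [tcaMul, tcaF, LinearMap.coe_mk, AddHom.coe_mk,
          Finset.sum_range_succ, Finset.sum_range_zero, finval0, finval1, finval2, finval3]
        norm_num [z1, z2, z3, z4, z5, z6]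
        ring
      · show tcaF (K := K)
            (tcaExtMul (stdCocycle (K := K) (s := 3) (n := 2) 3 fun _ => 1) (a, f) (b, g))
              (i, 3) = tcaMul (tcaF (a, f)) (tcaF (b, g)) (i, 3)
        have e1 : tcaF (K := K)
            (tcaExtMul (stdCocycle (K := K) (s := 3) (n := 2) 3 fun _ => 1) (a, f) (b, g))
              (i, 3) =
            (tcaLact a g + tcaRact f b +
              stdCocycle (K := K) (s := 3) (n := 2) 3 (fun _ => 1) a b) (tcaδ (i, 0)) := by
          simp [tcaF, tcaExtMul, finval3]
        rw [e1, ext_dual_zero]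
        simp only [tcaMul, tcaF, LinearMap.coe_mk, AddHom.coe_mk,
          Finset.sum_range_succ, Finset.sum_range_zero, finval0, finval1, finval2, finval3]
        norm_num [z1, z2, z3, z4, z5, z6]
        ring
    · simp only [LinearEquiv.ofLinear_apply, tcaExtOne, gamma_one_one, neg_zero]
      funext ⟨i, m⟩
      fin_cases m <;>
        simp [tcaF, tcaOne, finval0, finval1, finval2, finval3]
  · refine ⟨{ toFun := fun x => x.2 tcaOne
              map_add' := by intros; simp
              map_smul' := by intros; simp }, ?_, ?_⟩
    · rintro ⟨a, f⟩ ⟨b, g⟩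
      simp only [tcaExtMul, LinearMap.coe_mk, AddHom.coe_mk, LinearMap.add_apply,
        tcaLact, tcaRact, LinearMap.comp_apply, tcaMulRight, tcaMulLeft,
        LinearMap.coe_mk, AddHom.coe_mk, gamma_apply_one, tca_one_mul, tca_mul_one]
      ring
    · rintro ⟨a, f⟩ hx
      rcases eq_or_ne f 0 with hf | hf
      · have ha : a ≠ 0 := by
          intro h; exact hx (by simp [h, hf, Prod.ext_iff])
        obtain ⟨p, hp⟩ : ∃ p, a p ≠ 0 := by
          by_contra h; push_neg at h; exact ha (funext h)
        refine ⟨(0, LinearMap.proj p), ?_⟩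
        simp only [tcaExtMul, LinearMap.coe_mk, AddHom.coe_mk, LinearMap.add_apply,
          tcaLact, tcaRact, LinearMap.comp_apply, tcaMulRight, tcaMulLeft,
          gamma_zero_right, tca_one_mul, hf]
        simpa [tca_one_mul] using hp
      · obtain ⟨c, hc⟩ : ∃ c, f c ≠ 0 := by
          by_contra h; push_neg at h; exact hf (LinearMap.ext h)
        refine ⟨(c, 0), ?_⟩
        simp only [tcaExtMul, LinearMap.coe_mk, AddHom.coe_mk, LinearMap.add_apply,
          tcaLact, tcaRact, LinearMap.comp_apply, tcaMulRight, tcaMulLeft,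
          gamma_apply_one, tca_mul_one]
        simpa [tca_mul_one] using hc
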